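/- arXiv:1411.1788 — 2 statements merged into one kernel-verified Lean document; each statement's English description precedes it below -/
import Mathlib

section
/- If e = xy is an edge in a 2-connected series-parallel graph (G,s,t), then (G,x,y) is a series-parallel graph. -/
/-!
Signed multigraphs (parallel edges allowed), two-terminal graphs,
series/parallel connections and flows, following the terminology of
Kaiser–Rollová, "Nowhere-zero flows in signed series-parallel graphs".

Vertices and edges are labelled by natural numbers.  An edge `e` has the
two endvertices `fst e` and `snd e` (its two half-edges are the ends at
`fst e` and at `snd e`), and `sign e = true` means that `e` is positive.
-/

/-- The value `+1` (pointing towards its endvertex) or `-1` (pointing away)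
of a Boolean direction of a half-edge. -/
def dirVal (b : Bool) : ℤ := if b then 1 else -1

/-- A signed multigraph. -/
structure SignedGraph where
  verts : Finset ℕ
  edges : Finset ℕ
  fst : ℕ → ℕ
  snd : ℕ → ℕ
  sign : ℕ → Bool
  fst_mem : ∀ e ∈ edges, fst e ∈ verts
  snd_mem : ∀ e ∈ edges, snd e ∈ verts

namespace SignedGraph

/-- Edge `e` joins the vertices `u` and `v`. -/
def Joins (G : SignedGraph) (e u v : ℕ) : Prop :=
  (G.fst e = u ∧ G.snd e = v) ∨ (G.fst e = v ∧ G.snd e = u)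

/-- `u` and `v` are adjacent (joined by some edge). -/
def Adj (G : SignedGraph) (u v : ℕ) : Prop := ∃ e ∈ G.edges, G.Joins e u v

/-- The degree of a vertex (each incidence of an edge counts once,
so loops count twice). -/
def degree (G : SignedGraph) (v : ℕ) : ℕ :=
  ∑ e ∈ G.edges, ((if G.fst e = v then 1 else 0) + (if G.snd e = v then 1 else 0))

/-- `e` and `f` are parallel edges: distinct edges joining the same
pair of vertices. -/
def Parallel (G : SignedGraph) (e f : ℕ) : Prop :=
  e ≠ f ∧ ((G.fst e = G.fst f ∧ G.snd e = G.snd f) ∨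
           (G.fst e = G.snd f ∧ G.snd e = G.fst f))

/-- `v` is contained in a 2-cycle (a cycle formed by two parallel edges). -/
def In2Cycle (G : SignedGraph) (v : ℕ) : Prop :=
  ∃ e ∈ G.edges, ∃ f ∈ G.edges, G.Parallel e f ∧ G.fst e ≠ G.snd e ∧
    (G.fst e = v ∨ G.snd e = v)

/-- `beta G` is the number of distinct 2-cycles of `G`. -/
def beta (G : SignedGraph) : ℕ :=
  ((G.edges ×ˢ G.edges).filter fun p => p.1 < p.2 ∧ G.fst p.1 ≠ G.snd p.1 ∧
     ((G.fst p.1 = G.fst p.2 ∧ G.snd p.1 = G.snd p.2) ∨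
      (G.fst p.1 = G.snd p.2 ∧ G.snd p.1 = G.fst p.2))).card

/-- An orientation of a signed graph: `o₁ e` (resp. `o₂ e`) tells whether the
half-edge of `e` at `fst e` (resp. at `snd e`) points towards its endvertex.
Of the two half-edges of a positive edge exactly one points towards its
endvertex, while for a negative edge none or both do. -/
def IsOrientation (G : SignedGraph) (o₁ o₂ : ℕ → Bool) : Prop :=
  ∀ e ∈ G.edges, (G.sign e = true → o₁ e ≠ o₂ e) ∧ (G.sign e = false → o₁ e = o₂ e)

/-- The excess (inflow minus outflow) at a vertex `v`. -/
def excess (G : SignedGraph) (o₁ o₂ : ℕ → Bool) (φ : ℕ → ℤ) (v : ℕ) : ℤ :=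
  ∑ e ∈ G.edges, ((if G.fst e = v then dirVal (o₁ e) * φ e else 0) +
                  (if G.snd e = v then dirVal (o₂ e) * φ e else 0))

/-- `(o₁, o₂, φ)` is a nowhere-zero `k`-flow on `G`: an orientation together
with a valuation of the edges by nonzero integers of absolute value less
than `k` such that at every vertex the inflow equals the outflow. -/
structure IsNZFlow (G : SignedGraph) (k : ℕ) (o₁ o₂ : ℕ → Bool) (φ : ℕ → ℤ) : Prop where
  orient : G.IsOrientation o₁ o₂
  nonzero : ∀ e ∈ G.edges, φ e ≠ 0
  bounded : ∀ e ∈ G.edges, |φ e| < (k : ℤ)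
  conserve : ∀ v ∈ G.verts, G.excess o₁ o₂ φ v = 0

/-- `G` admits a nowhere-zero `k`-flow. -/
def HasNZFlow (G : SignedGraph) (k : ℕ) : Prop := ∃ o₁ o₂ φ, G.IsNZFlow k o₁ o₂ φ

/-- `G` is flow-admissible: it admits a nowhere-zero `k`-flow for some `k`. -/
def FlowAdmissible (G : SignedGraph) : Prop := ∃ k, G.HasNZFlow k

/-- `(vs, es)` is a cycle of `G`: distinct vertices `vs = [v₀, …, v_{m-1}]`,
distinct edges `es = [e₀, …, e_{m-1}]`, where `eᵢ` joins `vᵢ` and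
`v_{i+1 (mod m)}`. -/
structure IsCycle (G : SignedGraph) (vs es : List ℕ) : Prop where
  nonempty : es ≠ []
  len : vs.length = es.length
  vnodup : vs.Nodup
  enodup : es.Nodup
  vmem : ∀ v ∈ vs, v ∈ G.verts
  emem : ∀ e ∈ es, e ∈ G.edges
  link : ∀ i < es.length,
    G.Joins (es.getD i 0) (vs.getD i 0) (vs.getD ((i + 1) % vs.length) 0)

/-- The number of negative edges in a list of edges. -/
def negCount (G : SignedGraph) (es : List ℕ) : ℕ :=
  (es.filter fun e => G.sign e = false).length

/-- A balanced cycle: a cycle with an even number of negative edges. -/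
def IsBalancedCycle (G : SignedGraph) (vs es : List ℕ) : Prop :=
  G.IsCycle vs es ∧ Even (G.negCount es)

/-- An unbalanced cycle: a cycle with an odd number of negative edges. -/
def IsUnbalancedCycle (G : SignedGraph) (vs es : List ℕ) : Prop :=
  G.IsCycle vs es ∧ Odd (G.negCount es)

/-- A signed graph is unbalanced if it contains an unbalanced cycle. -/
def IsUnbalanced (G : SignedGraph) : Prop := ∃ vs es, G.IsUnbalancedCycle vs es

/-- `(vs, es)` is a path of `G` (possibly trivial, i.e. a single vertex). -/
structure IsPath (G : SignedGraph) (vs es : List ℕ) : Prop where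
  nonempty : vs ≠ []
  len : vs.length = es.length + 1
  vnodup : vs.Nodup
  enodup : es.Nodup
  vmem : ∀ v ∈ vs, v ∈ G.verts
  emem : ∀ e ∈ es, e ∈ G.edges
  link : ∀ i < es.length, G.Joins (es.getD i 0) (vs.getD i 0) (vs.getD (i + 1) 0)

/-- A barbell: two edge-disjoint unbalanced cycles together with a path,
which either joins two vertex-disjoint cycles and is internally
vertex-disjoint from them, or is the trivial path at the single
common vertex of the two cycles. -/
structure IsBarbell (G : SignedGraph) (vs₁ es₁ vs₂ es₂ pvs pes : List ℕ) : Prop where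
  cyc1 : G.IsUnbalancedCycle vs₁ es₁
  cyc2 : G.IsUnbalancedCycle vs₂ es₂
  edge_disj : ∀ e ∈ es₁, e ∉ es₂
  path : G.IsPath pvs pes
  shape :
    ((∀ v ∈ vs₁, v ∉ vs₂) ∧
      pvs.getD 0 0 ∈ vs₁ ∧ pvs.getD (pvs.length - 1) 0 ∈ vs₂ ∧
      (∀ i, 0 < i → i < pvs.length - 1 → pvs.getD i 0 ∉ vs₁ ∧ pvs.getD i 0 ∉ vs₂)) ∨
    (∃ w, w ∈ vs₁ ∧ w ∈ vs₂ ∧ (∀ v ∈ vs₁, v ∈ vs₂ → v = w) ∧ pvs = [w] ∧ pes = [])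

/-- The edge `e` is contained in a signed circuit (a balanced cycle
or a barbell). -/
def InSignedCircuit (G : SignedGraph) (e : ℕ) : Prop :=
  (∃ vs es, G.IsBalancedCycle vs es ∧ e ∈ es) ∨
  (∃ vs₁ es₁ vs₂ es₂ pvs pes, G.IsBarbell vs₁ es₁ vs₂ es₂ pvs pes ∧
    (e ∈ es₁ ∨ e ∈ es₂ ∨ e ∈ pes))

/-- `H` is a subgraph of `G` (with the same labels, endvertices and signs). -/
def IsSubgraph (H G : SignedGraph) : Prop :=
  H.verts ⊆ G.verts ∧ H.edges ⊆ G.edges ∧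
  ∀ e ∈ H.edges, H.fst e = G.fst e ∧ H.snd e = G.snd e ∧ H.sign e = G.sign e

/-- Switching at a vertex `v`: the signs of all edges incident with `v`
(i.e. with exactly one end at `v`) are inverted. -/
def switchAt (G : SignedGraph) (v : ℕ) : SignedGraph where
  verts := G.verts
  edges := G.edges
  fst := G.fst
  snd := G.snd
  sign := fun e => if xor (G.fst e == v) (G.snd e == v) then !(G.sign e) else G.sign e
  fst_mem := G.fst_mem
  snd_mem := G.snd_mem

/-- Connectedness of a (nonempty) signed graph. -/
def Connected (G : SignedGraph) : Prop :=
  G.verts.Nonempty ∧ ∀ u ∈ G.verts, ∀ v ∈ G.verts, Relation.ReflTransGen G.Adj u v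

/-- Deletion of a vertex together with all incident edges. -/
def deleteVert (G : SignedGraph) (v : ℕ) : SignedGraph where
  verts := G.verts.erase v
  edges := G.edges.filter fun e => G.fst e ≠ v ∧ G.snd e ≠ v
  fst := G.fst
  snd := G.snd
  sign := G.sign
  fst_mem := by
    intro e he
    simp only [Finset.mem_filter] at he
    exact Finset.mem_erase.mpr ⟨he.2.1, G.fst_mem e he.1⟩
  snd_mem := by
    intro e he
    simp only [Finset.mem_filter] at he
    exact Finset.mem_erase.mpr ⟨he.2.2, G.snd_mem e he.1⟩

/-- `G` is 2-connected: it is connected and remains connected after the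
deletion of any single vertex. -/
def TwoConnected (G : SignedGraph) : Prop :=
  G.Connected ∧ ∀ v ∈ G.verts, (G.deleteVert v).Connected

end SignedGraph

/-- A two-terminal signed graph: a signed graph with two distinguished
distinct vertices, the source terminal `s` and the target terminal `t`. -/
structure TTGraph extends SignedGraph where
  s : ℕ
  t : ℕ
  s_mem : s ∈ verts
  t_mem : t ∈ verts
  s_ne_t : s ≠ t

namespace TTGraph

/-- Switching at a vertex of a two-terminal signed graph. -/
def switchAt (G : TTGraph) (v : ℕ) : TTGraph where
  toSignedGraph := G.toSignedGraph.switchAt v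
  s := G.s
  t := G.t
  s_mem := G.s_mem
  t_mem := G.t_mem
  s_ne_t := G.s_ne_t

end TTGraph

/-- Two two-terminal signed graphs are switching equivalent if one is
obtained from the other by a finite sequence of switchings. -/
def SwitchEquiv (G G' : TTGraph) : Prop :=
  Relation.ReflTransGen (fun A B => ∃ v ∈ A.verts, B = A.switchAt v) G G'

/-- `G` is the series connection `S(H₁, H₂)`: `H₁` and `H₂` are subgraphs
of `G` sharing exactly the vertex `H₁.t = H₂.s`, partitioning the edges,
with `G.s = H₁.s` and `G.t = H₂.t`. -/
structure IsSeriesConn2 (G H₁ H₂ : TTGraph) : Prop where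
  sub1 : SignedGraph.IsSubgraph H₁.toSignedGraph G.toSignedGraph
  sub2 : SignedGraph.IsSubgraph H₂.toSignedGraph G.toSignedGraph
  vert_union : H₁.verts ∪ H₂.verts = G.verts
  vert_inter : H₁.verts ∩ H₂.verts = {H₁.t}
  mid : H₁.t = H₂.s
  edge_union : H₁.edges ∪ H₂.edges = G.edges
  edge_disj : Disjoint H₁.edges H₂.edges
  src : G.s = H₁.s
  tgt : G.t = H₂.t

/-- `G` is the parallel connection `P(H₁, H₂)`: `H₁` and `H₂` are subgraphs
of `G` sharing exactly the two terminals, partitioning the edges, with the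
terminals of `G`, `H₁` and `H₂` identified. -/
structure IsParallelConn2 (G H₁ H₂ : TTGraph) : Prop where
  sub1 : SignedGraph.IsSubgraph H₁.toSignedGraph G.toSignedGraph
  sub2 : SignedGraph.IsSubgraph H₂.toSignedGraph G.toSignedGraph
  vert_union : H₁.verts ∪ H₂.verts = G.verts
  vert_inter : H₁.verts ∩ H₂.verts = {H₁.s, H₁.t}
  src_eq : H₁.s = H₂.s
  tgt_eq : H₁.t = H₂.t
  edge_union : H₁.edges ∪ H₂.edges = G.edges
  edge_disj : Disjoint H₁.edges H₂.edges
  src : G.s = H₁.s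
  tgt : G.t = H₁.t

/-- `G` is a (signed) copy of `K₂`: a single edge joining the two terminals. -/
def IsSignedK2 (G : TTGraph) : Prop :=
  G.verts = {G.s, G.t} ∧ ∃ e, G.edges = {e} ∧ G.toSignedGraph.Joins e G.s G.t

/-- Series-parallel two-terminal graphs: obtained from copies of `K₂` by
iterated series and parallel connections. -/
inductive IsSP : TTGraph → Prop
  | k2 {G} : IsSignedK2 G → IsSP G
  | series {G H₁ H₂} : IsSeriesConn2 G H₁ H₂ → IsSP H₁ → IsSP H₂ → IsSP G
  | parallel {G H₁ H₂} : IsParallelConn2 G H₁ H₂ → IsSP H₁ → IsSP H₂ → IsSP G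

/-- `G` is the series connection `S(H₁, …, Hₙ)` of the graphs in the list
(of length at least two). -/
inductive IsSeriesConnList : TTGraph → List TTGraph → Prop
  | two {G H₁ H₂} : IsSeriesConn2 G H₁ H₂ → IsSeriesConnList G [H₁, H₂]
  | cons {G G' H l} : IsSeriesConn2 G H G' → IsSeriesConnList G' l →
      IsSeriesConnList G (H :: l)

/-- `G` is the parallel connection `P(H₁, …, Hₙ)` of the graphs in the list
(of length at least two). -/
inductive IsParallelConnList : TTGraph → List TTGraph → Prop
  | two {G H₁ H₂} : IsParallelConn2 G H₁ H₂ → IsParallelConnList G [H₁, H₂]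
  | cons {G G' H l} : IsParallelConn2 G H G' → IsParallelConnList G' l →
      IsParallelConnList G (H :: l)

/-- `l` is the list of parts of `G` for a series connection: `G` is a series
connection of the series-parallel graphs in `l`, with `l` of maximum length. -/
def IsSeriesPartsOf (G : TTGraph) (l : List TTGraph) : Prop :=
  IsSeriesConnList G l ∧ (∀ H ∈ l, IsSP H) ∧
  ∀ l', IsSeriesConnList G l' → (∀ H ∈ l', IsSP H) → l'.length ≤ l.length

/-- `l` is the list of parts of `G` for a parallel connection. -/
def IsParallelPartsOf (G : TTGraph) (l : List TTGraph) : Prop :=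
  IsParallelConnList G l ∧ (∀ H ∈ l, IsSP H) ∧
  ∀ l', IsParallelConnList G l' → (∀ H ∈ l', IsSP H) → l'.length ≤ l.length

/-- `l` is the list of parts of `G`. -/
def IsPartsOf (G : TTGraph) (l : List TTGraph) : Prop :=
  IsSeriesPartsOf G l ∨ IsParallelPartsOf G l

/-- `H` is a part of `G`. -/
def IsPart (H G : TTGraph) : Prop := ∃ l, IsPartsOf G l ∧ H ∈ l

/-- `H` is a piece of `G`: there is a sequence `H = H₀, H₁, …, Hₘ = G`
where each `Hⱼ` is a part of `H_{j+1}`; in particular `G` is a piece of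
itself. -/
def IsPiece (H G : TTGraph) : Prop := Relation.ReflTransGen IsPart H G

/-- `G` is of series type: it is a series connection of its parts. -/
def IsSeriesType (G : TTGraph) : Prop := ∃ l, IsSeriesPartsOf G l

/-- `G` is of parallel type: it is a parallel connection of its parts. -/
def IsParallelType (G : TTGraph) : Prop := ∃ l, IsParallelPartsOf G l

/-- `H` is an endpart of `G`: the first or last part of a series
decomposition of `G` into its parts. -/
def IsEndpartOf (H G : TTGraph) : Prop :=
  ∃ l, IsSeriesPartsOf G l ∧ (l.head? = some H ∨ l.getLast? = some H)

/-- `DepthLe G d`: the depth of `G` is at most `d`.  The depth of a signed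
`K₂` is `0`; otherwise it is `1` plus the maximum depth of a part. -/
inductive DepthLe : TTGraph → ℕ → Prop
  | k2 {G d} : IsSignedK2 G → DepthLe G d
  | step {G l d} : IsPartsOf G l → (∀ H ∈ l, DepthLe H d) → DepthLe G (d + 1)

/-- `HasDepth G d`: the depth of `G` is exactly `d`, i.e. `d` is the least
upper bound in the recursive definition of depth. -/
def HasDepth (G : TTGraph) (d : ℕ) : Prop :=
  DepthLe G d ∧ ∀ d' < d, ¬ DepthLe G d'

/-- `G` is reduced: each non-terminal vertex has degree at least `3`, and
no two parallel edges have the same sign. -/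
def IsReducedGraph (G : TTGraph) : Prop :=
  (∀ v ∈ G.verts, v ≠ G.s → v ≠ G.t → 3 ≤ G.toSignedGraph.degree v) ∧
  (∀ e ∈ G.edges, ∀ f ∈ G.edges, G.toSignedGraph.Parallel e f → G.sign e ≠ G.sign f)

/-- `G` is a positive `K₂` (denoted `K₂⁺`). -/
def IsPositiveK2 (G : TTGraph) : Prop :=
  IsSignedK2 G ∧ ∀ e ∈ G.edges, G.sign e = true

/-- `G` is the unbalanced 2-cycle `D`: two parallel edges of opposite signs
joining the two terminals. -/
def IsUnbalanced2Cycle (G : TTGraph) : Prop :=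
  G.verts = {G.s, G.t} ∧ ∃ e f, e ≠ f ∧ G.edges = {e, f} ∧
    G.toSignedGraph.Joins e G.s G.t ∧ G.toSignedGraph.Joins f G.s G.t ∧
    G.sign e ≠ G.sign f

/-- `G` is a string: a copy of `K₂⁺` or `D`, or a series connection of copies
of `K₂⁺` and `D`, in which every non-terminal vertex lies in a 2-cycle. -/
def IsString (G : TTGraph) : Prop :=
  (IsPositiveK2 G ∨ IsUnbalanced2Cycle G ∨
    ∃ l, IsSeriesConnList G l ∧ ∀ H ∈ l, IsPositiveK2 H ∨ IsUnbalanced2Cycle H) ∧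
  ∀ v ∈ G.verts, v ≠ G.s → v ≠ G.t → G.toSignedGraph.In2Cycle v

/-- `G` is a necklace: a parallel connection of two strings, at least one of
which is nontrivial (has more than two vertices). -/
def IsNecklace (G : TTGraph) : Prop :=
  ∃ H₁ H₂, IsParallelConn2 G H₁ H₂ ∧ IsString H₁ ∧ IsString H₂ ∧
    (2 < H₁.verts.card ∨ 2 < H₂.verts.card)

/-- `(o₁, o₂, φ)` is an `(a,b)`-pseudoflow on the two-terminal signed graph
`G`: like a nowhere-zero 6-flow, except that at the source terminal the
outflow exceeds the inflow by `a`, and at the target terminal the inflow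
exceeds the outflow by `b`. -/
structure IsPseudoflow (G : TTGraph) (a b : ℤ) (o₁ o₂ : ℕ → Bool) (φ : ℕ → ℤ) :
    Prop where
  orient : G.toSignedGraph.IsOrientation o₁ o₂
  nonzero : ∀ e ∈ G.edges, φ e ≠ 0
  bounded : ∀ e ∈ G.edges, |φ e| < 6
  conserve : ∀ v ∈ G.verts, v ≠ G.s → v ≠ G.t →
    G.toSignedGraph.excess o₁ o₂ φ v = 0
  out_s : G.toSignedGraph.excess o₁ o₂ φ G.s = -a
  in_t : G.toSignedGraph.excess o₁ o₂ φ G.t = b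

/-- `G` admits an `(a,b)`-pseudoflow. -/
def HasPseudoflow (G : TTGraph) (a b : ℤ) : Prop :=
  ∃ o₁ o₂ φ, IsPseudoflow G a b o₁ o₂ φ

/-- `I₅ = {-5, …, 5}`. -/
noncomputable def I5 : Finset ℤ := Finset.Icc (-5) 5

/-- The pair `(a,b)` is valid for `G`: `a ≠ 0` or `deg(s) ≥ 2`, and
`b ≠ 0` or `deg(t) ≥ 2`. -/
def ValidPair (G : TTGraph) (a b : ℤ) : Prop :=
  (a ≠ 0 ∨ 2 ≤ G.toSignedGraph.degree G.s) ∧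
  (b ≠ 0 ∨ 2 ≤ G.toSignedGraph.degree G.t)

/-- `G` is a flow-admissible signed series-parallel graph with no
nowhere-zero 6-flow, with the minimum number of edges among all such
graphs. -/
def MinCounterexample (G : TTGraph) : Prop :=
  IsSP G ∧ G.toSignedGraph.FlowAdmissible ∧ ¬ G.toSignedGraph.HasNZFlow 6 ∧
  ∀ G' : TTGraph, IsSP G' → G'.toSignedGraph.FlowAdmissible →
    ¬ G'.toSignedGraph.HasNZFlow 6 → G.edges.card ≤ G'.edges.card

/-- `W` is a copy of `S(K₂⁺, D, K₂⁺)`. -/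
def IsSK2DK2 (W : TTGraph) : Prop :=
  ∃ A B C, IsSeriesConnList W [A, B, C] ∧ IsPositiveK2 A ∧
    IsUnbalanced2Cycle B ∧ IsPositiveK2 C

/-- `G'` is obtained from `G` by replacing the piece `H` (with terminals
`H.s`, `H.t`) by the two-terminal graph `W`: the edges and non-terminal
vertices of `H` are removed, `W` (whose new vertices are fresh) is added,
and its terminals are identified with the terminals of `H`. -/
def IsReplacement (G H G' W : TTGraph) : Prop :=
  W.s = H.s ∧ W.t = H.t ∧ G'.s = G.s ∧ G'.t = G.t ∧
  W.verts ∩ G.verts ⊆ {H.s, H.t} ∧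
  G'.verts = (G.verts \ (H.verts \ {H.s, H.t})) ∪ W.verts ∧
  G'.edges = (G.edges \ H.edges) ∪ W.edges ∧
  Disjoint (G.edges \ H.edges) W.edges ∧
  (∀ e ∈ G.edges \ H.edges,
    G'.fst e = G.fst e ∧ G'.snd e = G.snd e ∧ G'.sign e = G.sign e) ∧
  SignedGraph.IsSubgraph W.toSignedGraph G'.toSignedGraph

/-!
A series connection is never 2-connected (its middle vertex separates the terminals), so
`G = P(G₁, G₂)` with, say, `e ∈ G₁`. Induction on `G₁` proves more generally: if `X = P(G₁, H)`
with `H` series-parallel, then `X` is series-parallel between the ends of any edge `e` of `G₁`.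
If `G₁` is the edge `e`, take `X` or `X` with its terminals swapped. If `G₁ = S(A, B)` with
`e ∈ A`, then `X = P(A, S(H, B⁻¹))` between the terminals of `A`, where `B⁻¹` is `B` with its
terminals swapped; if `G₁ = P(A, B)` with `e ∈ A`, then `X = P(A, P(B, H))`. In both cases the
induction hypothesis for `A` applies.
-/

open Finset

namespace SignedGraph

theorem mem_verts_of_joins {G : SignedGraph} {e u v : ℕ} (he : e ∈ G.edges)
    (h : G.Joins e u v) : u ∈ G.verts ∧ v ∈ G.verts := by
  rcases h with ⟨rfl, rfl⟩ | ⟨rfl, rfl⟩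
  · exact ⟨G.fst_mem e he, G.snd_mem e he⟩
  · exact ⟨G.snd_mem e he, G.fst_mem e he⟩

namespace IsSubgraph

variable {A B X : SignedGraph}

theorem trans (hAB : A.IsSubgraph B) (hBX : B.IsSubgraph X) : A.IsSubgraph X :=
  ⟨hAB.1.trans hBX.1, hAB.2.1.trans hBX.2.1, fun e he => by
    obtain ⟨h₁, h₂, h₃⟩ := hAB.2.2 e he
    obtain ⟨h₁', h₂', h₃'⟩ := hBX.2.2 e (hAB.2.1 he)
    exact ⟨h₁.trans h₁', h₂.trans h₂', h₃.trans h₃'⟩⟩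

theorem joins_iff (h : A.IsSubgraph X) {e : ℕ} (he : e ∈ A.edges) {u v : ℕ} :
    X.Joins e u v ↔ A.Joins e u v := by
  obtain ⟨h₁, h₂, -⟩ := h.2.2 e he
  simp only [Joins, h₁, h₂]

end IsSubgraph

def union (X A B : SignedGraph) (hA : A.IsSubgraph X) (hB : B.IsSubgraph X) : SignedGraph where
  verts := A.verts ∪ B.verts
  edges := A.edges ∪ B.edges
  fst := X.fst
  snd := X.snd
  sign := X.sign
  fst_mem e he := by
    rcases mem_union.mp he with he | he
    · exact mem_union_left _ ((hA.2.2 e he).1 ▸ A.fst_mem e he)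
    · exact mem_union_right _ ((hB.2.2 e he).1 ▸ B.fst_mem e he)
  snd_mem e he := by
    rcases mem_union.mp he with he | he
    · exact mem_union_left _ ((hA.2.2 e he).2.1 ▸ A.snd_mem e he)
    · exact mem_union_right _ ((hB.2.2 e he).2.1 ▸ B.snd_mem e he)

section union

variable {X A B : SignedGraph} (hA : A.IsSubgraph X) (hB : B.IsSubgraph X)

theorem union_isSubgraph : (X.union A B hA hB).IsSubgraph X :=
  ⟨union_subset hA.1 hB.1, union_subset hA.2.1 hB.2.1, fun _ _ => ⟨rfl, rfl, rfl⟩⟩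

theorem isSubgraph_union_left : A.IsSubgraph (X.union A B hA hB) :=
  ⟨subset_union_left, subset_union_left, hA.2.2⟩

theorem isSubgraph_union_right : B.IsSubgraph (X.union A B hA hB) :=
  ⟨subset_union_right, subset_union_right, hB.2.2⟩

end union

def IsSPBetween (G : SignedGraph) (x y : ℕ) : Prop :=
  ∃ G' : TTGraph, G'.toSignedGraph = G ∧ G'.s = x ∧ G'.t = y ∧ IsSP G'

end SignedGraph

namespace TTGraph

def rev (G : TTGraph) : TTGraph :=
  ⟨G.toSignedGraph, G.t, G.s, G.t_mem, G.s_mem, G.s_ne_t.symm⟩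

end TTGraph

namespace IsSeriesConn2

variable {G H₁ H₂ : TTGraph}

theorem rev (h : IsSeriesConn2 G H₁ H₂) : IsSeriesConn2 G.rev H₂.rev H₁.rev where
  sub1 := h.sub2
  sub2 := h.sub1
  vert_union := (union_comm _ _).trans h.vert_union
  vert_inter := by
    show H₂.verts ∩ H₁.verts = {H₂.s}
    rw [inter_comm, h.vert_inter, h.mid]
  mid := h.mid.symm
  edge_union := (union_comm _ _).trans h.edge_union
  edge_disj := h.edge_disj.symm
  src := h.tgt
  tgt := h.src

theorem src_ne_mid (h : IsSeriesConn2 G H₁ H₂) : G.s ≠ H₁.t :=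
  h.src ▸ H₁.s_ne_t

theorem tgt_ne_mid (h : IsSeriesConn2 G H₁ H₂) : G.t ≠ H₁.t :=
  h.mid ▸ h.rev.src_ne_mid

theorem eq_mid_of_mem_of_mem (h : IsSeriesConn2 G H₁ H₂) {v : ℕ} (h₁ : v ∈ H₁.verts)
    (h₂ : v ∈ H₂.verts) : v = H₁.t :=
  mem_singleton.mp (h.vert_inter ▸ mem_inter.mpr ⟨h₁, h₂⟩)

theorem src_notMem_right (h : IsSeriesConn2 G H₁ H₂) : G.s ∉ H₂.verts := fun hs =>
  h.src_ne_mid (h.eq_mid_of_mem_of_mem (h.src ▸ H₁.s_mem) hs)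

end IsSeriesConn2

namespace IsParallelConn2

variable {G H₁ H₂ : TTGraph}

theorem rev (h : IsParallelConn2 G H₁ H₂) : IsParallelConn2 G.rev H₁.rev H₂.rev where
  sub1 := h.sub1
  sub2 := h.sub2
  vert_union := h.vert_union
  vert_inter := h.vert_inter.trans (pair_comm _ _)
  src_eq := h.tgt_eq
  tgt_eq := h.src_eq
  edge_union := h.edge_union
  edge_disj := h.edge_disj
  src := h.tgt
  tgt := h.src

theorem symm (h : IsParallelConn2 G H₁ H₂) : IsParallelConn2 G H₂ H₁ where
  sub1 := h.sub2
  sub2 := h.sub1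
  vert_union := (union_comm _ _).trans h.vert_union
  vert_inter := by rw [inter_comm, h.vert_inter, h.src_eq, h.tgt_eq]
  src_eq := h.src_eq.symm
  tgt_eq := h.tgt_eq.symm
  edge_union := (union_comm _ _).trans h.edge_union
  edge_disj := h.edge_disj.symm
  src := h.src.trans h.src_eq
  tgt := h.tgt.trans h.tgt_eq

theorem eq_or_eq_of_mem_of_mem (h : IsParallelConn2 G H₁ H₂) {v : ℕ} (h₁ : v ∈ H₁.verts)
    (h₂ : v ∈ H₂.verts) : v = H₁.s ∨ v = H₁.t := by
  have hv := h.vert_inter ▸ mem_inter.mpr ⟨h₁, h₂⟩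
  simpa using hv

end IsParallelConn2

theorem IsSP.rev {G : TTGraph} (hG : IsSP G) : IsSP G.rev := by
  induction hG with
  | k2 hk =>
    obtain ⟨hV, e, hE, hj⟩ := hk
    exact .k2 ⟨hV.trans (pair_comm _ _), e, hE, hj.symm⟩
  | series hc _ _ ih₁ ih₂ => exact .series hc.rev ih₂ ih₁
  | parallel hc _ _ ih₁ ih₂ => exact .parallel hc.rev ih₁ ih₂

section Subgraphs

variable {X : SignedGraph} {A B : TTGraph}

theorem exists_isSeriesConn2_of_isSubgraph (hA : A.IsSubgraph X) (hB : B.IsSubgraph X)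
    (hAB : A.verts ∩ B.verts = {A.t}) (hmid : A.t = B.s) (hd : Disjoint A.edges B.edges) :
    ∃ C : TTGraph, C.IsSubgraph X ∧ IsSeriesConn2 C A B :=
  ⟨{ toSignedGraph := X.union _ _ hA hB
     s := A.s
     t := B.t
     s_mem := mem_union_left _ A.s_mem
     t_mem := mem_union_right _ B.t_mem
     s_ne_t := fun h => A.s_ne_t <| mem_singleton.mp <|
       hAB ▸ mem_inter.mpr ⟨A.s_mem, h ▸ B.t_mem⟩ },
    SignedGraph.union_isSubgraph hA hB,
    { sub1 := SignedGraph.isSubgraph_union_left hA hB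
      sub2 := SignedGraph.isSubgraph_union_right hA hB
      vert_union := rfl
      vert_inter := hAB
      mid := hmid
      edge_union := rfl
      edge_disj := hd
      src := rfl
      tgt := rfl }⟩

theorem exists_isParallelConn2_of_isSubgraph (hA : A.IsSubgraph X) (hB : B.IsSubgraph X)
    (hAB : A.verts ∩ B.verts = {A.s, A.t}) (hs : A.s = B.s) (ht : A.t = B.t)
    (hd : Disjoint A.edges B.edges) :
    ∃ C : TTGraph, C.IsSubgraph X ∧ IsParallelConn2 C A B :=
  ⟨{ toSignedGraph := X.union _ _ hA hB
     s := A.s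
     t := A.t
     s_mem := mem_union_left _ A.s_mem
     t_mem := mem_union_left _ A.t_mem
     s_ne_t := A.s_ne_t },
    SignedGraph.union_isSubgraph hA hB,
    { sub1 := SignedGraph.isSubgraph_union_left hA hB
      sub2 := SignedGraph.isSubgraph_union_right hA hB
      vert_union := rfl
      vert_inter := hAB
      src_eq := hs
      tgt_eq := ht
      edge_union := rfl
      edge_disj := hd
      src := rfl
      tgt := rfl }⟩

end Subgraphs

namespace IsParallelConn2

variable {X G H G₁ G₂ : TTGraph}

theorem exists_of_isSeriesConn2_left (hX : IsParallelConn2 X G H) (hc : IsSeriesConn2 G G₁ G₂) :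
    ∃ X₁ H' : TTGraph, X₁.toSignedGraph = X.toSignedGraph ∧ IsParallelConn2 X₁ G₁ H' ∧
      IsSeriesConn2 H' H G₂.rev := by
  have hG₁ : G₁.IsSubgraph X.toSignedGraph := hc.sub1.trans hX.sub1
  have hHG₂ : H.verts ∩ G₂.verts = {H.t} := by
    ext v
    simp only [mem_inter, mem_singleton]
    refine ⟨fun ⟨hH, h₂⟩ => ?_, fun hv => ⟨hv ▸ H.t_mem, hv ▸ hX.tgt_eq ▸ hc.tgt ▸ G₂.t_mem⟩⟩
    rcases hX.eq_or_eq_of_mem_of_mem (hc.sub2.1 h₂) hH with rfl | rfl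
    · exact absurd h₂ hc.src_notMem_right
    · exact hX.tgt_eq
  obtain ⟨H', hH', hS⟩ := exists_isSeriesConn2_of_isSubgraph (B := G₂.rev) hX.sub2
    (hc.sub2.trans hX.sub1) hHG₂ (hX.tgt_eq.symm.trans hc.tgt)
    (hX.edge_disj.symm.mono_right hc.sub2.2.1)
  refine ⟨⟨X.toSignedGraph, G₁.s, G₁.t, hG₁.1 G₁.s_mem, hG₁.1 G₁.t_mem, G₁.s_ne_t⟩, H', rfl,
    { sub1 := hG₁
      sub2 := hH'
      vert_union := ?_
      vert_inter := ?_
      src_eq := (hc.src.symm.trans hX.src_eq).trans hS.src.symm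
      tgt_eq := hc.mid.trans hS.tgt.symm
      edge_union := ?_
      edge_disj := ?_
      src := rfl
      tgt := rfl }, hS⟩
  · rw [← hS.vert_union, ← hX.vert_union, ← hc.vert_union]
    ac_rfl
  · rw [← hS.vert_union]
    ext v
    simp only [mem_inter, mem_union, mem_insert, mem_singleton]
    constructor
    · rintro ⟨h₁, hH | h₂⟩
      · rcases hX.eq_or_eq_of_mem_of_mem (hc.sub1.1 h₁) hH with rfl | rfl
        · exact .inl hc.src
        · exact .inr (hc.eq_mid_of_mem_of_mem h₁ (hc.tgt ▸ G₂.t_mem))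
      · exact .inr (hc.eq_mid_of_mem_of_mem h₁ h₂)
    · rintro (rfl | rfl)
      · exact ⟨G₁.s_mem, .inl (by rw [← hc.src, hX.src_eq]; exact H.s_mem)⟩
      · exact ⟨G₁.t_mem, .inr (hc.mid ▸ G₂.s_mem)⟩
  · rw [← hS.edge_union, ← hX.edge_union, ← hc.edge_union]
    ac_rfl
  · rw [← hS.edge_union]
    exact disjoint_union_right.mpr ⟨hX.edge_disj.mono_left hc.sub1.2.1, hc.edge_disj⟩

theorem exists_of_isParallelConn2_left (hX : IsParallelConn2 X G H)
    (hc : IsParallelConn2 G G₁ G₂) :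
    ∃ H' : TTGraph, IsParallelConn2 X G₁ H' ∧ IsParallelConn2 H' G₂ H := by
  have hs : G₂.s = H.s := (hc.src.trans hc.src_eq).symm.trans hX.src_eq
  have ht : G₂.t = H.t := (hc.tgt.trans hc.tgt_eq).symm.trans hX.tgt_eq
  have hG₂H : G₂.verts ∩ H.verts = {G₂.s, G₂.t} := by
    refine subset_antisymm (fun v hv => ?_) (insert_subset_iff.mpr ⟨?_, ?_⟩)
    · have hv := mem_inter.mp hv
      rcases hX.eq_or_eq_of_mem_of_mem (hc.sub2.1 hv.1) hv.2 with rfl | rfl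
      · simp [hc.src.trans hc.src_eq]
      · simp [hc.tgt.trans hc.tgt_eq]
    · exact mem_inter.mpr ⟨G₂.s_mem, hs ▸ H.s_mem⟩
    · exact singleton_subset_iff.mpr (mem_inter.mpr ⟨G₂.t_mem, ht ▸ H.t_mem⟩)
  obtain ⟨H', hH', hP⟩ := exists_isParallelConn2_of_isSubgraph (hc.sub2.trans hX.sub1) hX.sub2
    hG₂H hs ht (hX.edge_disj.mono_left hc.sub2.2.1)
  refine ⟨H',
    { sub1 := hc.sub1.trans hX.sub1
      sub2 := hH'
      vert_union := by rw [← hP.vert_union, ← hX.vert_union, ← hc.vert_union, union_assoc]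
      vert_inter := ?_
      src_eq := hc.src_eq.trans hP.src.symm
      tgt_eq := hc.tgt_eq.trans hP.tgt.symm
      edge_union := by rw [← hP.edge_union, ← hX.edge_union, ← hc.edge_union, union_assoc]
      edge_disj := ?_
      src := hX.src.trans hc.src
      tgt := hX.tgt.trans hc.tgt }, hP⟩
  · rw [← hP.vert_union, inter_union_distrib_left, hc.vert_inter, union_eq_left]
    intro v hv
    have hv := mem_inter.mp hv
    rcases hX.eq_or_eq_of_mem_of_mem (hc.sub1.1 hv.1) hv.2 with rfl | rfl
    · simp [hc.src]
    · simp [hc.tgt]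
  · rw [← hP.edge_union]
    exact disjoint_union_right.mpr ⟨hc.edge_disj, hX.edge_disj.mono_left hc.sub1.2.1⟩

end IsParallelConn2

theorem IsSignedK2.joins_of_mem {G : TTGraph} (hG : IsSignedK2 G) {e : ℕ} (he : e ∈ G.edges) :
    G.Joins e G.s G.t := by
  obtain ⟨-, e₀, hE, hj⟩ := hG
  rw [hE, mem_singleton] at he
  rwa [he]

namespace IsSP

theorem isSPBetween_of_joins {X : TTGraph} (hX : IsSP X) {e : ℕ} (hj : X.Joins e X.s X.t) :
    X.IsSPBetween (X.fst e) (X.snd e) := by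
  rcases hj with ⟨hs, ht⟩ | ⟨ht, hs⟩
  · exact ⟨X, rfl, hs.symm, ht.symm, hX⟩
  · exact ⟨X.rev, rfl, ht.symm, hs.symm, hX.rev⟩

theorem isSPBetween_of_isParallelConn2 {G : TTGraph} (hG : IsSP G) {X H : TTGraph}
    (hX : IsParallelConn2 X G H) (hH : IsSP H) {e : ℕ} (he : e ∈ G.edges) :
    X.IsSPBetween (X.fst e) (X.snd e) := by
  induction hG generalizing X H with
  | k2 hk =>
    refine (IsSP.parallel hX (.k2 hk) hH).isSPBetween_of_joins ?_
    rw [hX.src, hX.tgt, hX.sub1.joins_iff he]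
    exact hk.joins_of_mem he
  | series hc hsp₁ hsp₂ ih₁ ih₂ =>
    rcases mem_union.mp (hc.edge_union ▸ he) with he | he
    · obtain ⟨X₁, H', hX₁, hP, hS⟩ := hX.exists_of_isSeriesConn2_left hc
      rw [← hX₁]
      exact ih₁ hP (.series hS hH hsp₂.rev) he
    · obtain ⟨X₂, H', hX₂, hP, hS⟩ := hX.rev.exists_of_isSeriesConn2_left hc.rev
      rw [show X.toSignedGraph = X₂.toSignedGraph from hX₂.symm]
      exact ih₂ (X := X₂.rev) hP.rev (IsSP.series hS hH.rev hsp₁).rev he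
  | parallel hc hsp₁ hsp₂ ih₁ ih₂ =>
    rcases mem_union.mp (hc.edge_union ▸ he) with he | he
    · obtain ⟨H', hP, hP'⟩ := hX.exists_of_isParallelConn2_left hc
      exact ih₁ hP (.parallel hP' hsp₂ hH) he
    · obtain ⟨H', hP, hP'⟩ := hX.exists_of_isParallelConn2_left hc.symm
      exact ih₂ hP (.parallel hP' hsp₁ hH) he

end IsSP

namespace IsSeriesConn2

variable {G H₁ H₂ : TTGraph}

theorem mem_left_of_reflTransGen_deleteVert (h : IsSeriesConn2 G H₁ H₂) {u v : ℕ}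
    (huv : Relation.ReflTransGen (G.deleteVert H₁.t).Adj u v) (hu : u ∈ H₁.verts ∧ u ≠ H₁.t) :
    v ∈ H₁.verts ∧ v ≠ H₁.t := by
  induction huv with
  | refl => exact hu
  | @tail b c _ hbc ih =>
    obtain ⟨f, hf, hj⟩ := hbc
    simp only [SignedGraph.deleteVert, mem_filter] at hf
    obtain ⟨hf, hfst, hsnd⟩ := hf
    have hj : G.Joins f b c := hj
    rcases mem_union.mp (h.edge_union ▸ hf) with hf₁ | hf₂
    · refine ⟨(SignedGraph.mem_verts_of_joins hf₁ ((h.sub1.joins_iff hf₁).mp hj)).2, ?_⟩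
      rcases hj with ⟨-, rfl⟩ | ⟨rfl, -⟩
      exacts [hsnd, hfst]
    · have hb₂ := (SignedGraph.mem_verts_of_joins hf₂ ((h.sub2.joins_iff hf₂).mp hj)).1
      exact absurd (h.eq_mid_of_mem_of_mem ih.1 hb₂) ih.2

theorem not_twoConnected (h : IsSeriesConn2 G H₁ H₂) : ¬ G.TwoConnected := by
  rintro ⟨-, hdel⟩
  have hst := (hdel H₁.t (h.sub1.1 H₁.t_mem)).2 G.s (mem_erase.mpr ⟨h.src_ne_mid, G.s_mem⟩)
    G.t (mem_erase.mpr ⟨h.tgt_ne_mid, G.t_mem⟩)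
  have key := h.mem_left_of_reflTransGen_deleteVert hst ⟨h.src ▸ H₁.s_mem, h.src_ne_mid⟩
  exact key.2 (h.eq_mid_of_mem_of_mem key.1 (h.tgt ▸ H₂.t_mem))

end IsSeriesConn2

/-- If `e = xy` is an edge in a 2-connected series-parallel
graph `(G,s,t)`, then `(G,x,y)` is a series-parallel graph. -/
theorem two_connected_SP_change_terminals (G : TTGraph) (hSP : IsSP G)
    (h2 : G.toSignedGraph.TwoConnected) (e : ℕ) (he : e ∈ G.edges) :
    ∃ G' : TTGraph, G'.toSignedGraph = G.toSignedGraph ∧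
      G'.s = G.fst e ∧ G'.t = G.snd e ∧ IsSP G' := by
  cases hSP with
  | k2 hk => exact (IsSP.k2 hk).isSPBetween_of_joins (hk.joins_of_mem he)
  | series hc _ _ => exact absurd h2 hc.not_twoConnected
  | parallel hc hsp₁ hsp₂ =>
    rcases mem_union.mp (hc.edge_union ▸ he) with he | he
    · exact hsp₁.isSPBetween_of_isParallelConn2 hc hsp₂ he
    · exact hsp₂.isSPBetween_of_isParallelConn2 hc.symm hsp₁ he
end

section
/- Each non-terminal vertex of a series-parallel graph has at least two distinct neighbours. -/
namespace SignedGraph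

variable {G H : SignedGraph} {u v : ℕ}

theorem Joins.symm {e : ℕ} (h : G.Joins e u v) : G.Joins e v u := Or.symm h

theorem Adj.symm (h : G.Adj u v) : G.Adj v u :=
  let ⟨e, he, hj⟩ := h
  ⟨e, he, hj.symm⟩

theorem Adj.mem_right (h : G.Adj u v) : v ∈ G.verts := by
  obtain ⟨e, he, ⟨-, rfl⟩ | ⟨rfl, -⟩⟩ := h
  · exact G.snd_mem e he
  · exact G.fst_mem e he

theorem IsSubgraph.adj (hHG : H.IsSubgraph G) (h : H.Adj u v) : G.Adj u v := by
  obtain ⟨e, he, hj⟩ := h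
  obtain ⟨hfst, hsnd, -⟩ := hHG.2.2 e he
  exact ⟨e, hHG.2.1 he, by rwa [Joins, ← hfst, ← hsnd]⟩

def HasTwoNeighbours (G : SignedGraph) (v : ℕ) : Prop :=
  ∃ u w, u ≠ w ∧ G.Adj v u ∧ G.Adj v w

theorem IsSubgraph.hasTwoNeighbours (hHG : H.IsSubgraph G) (h : H.HasTwoNeighbours v) :
    G.HasTwoNeighbours v :=
  let ⟨u, w, huw, hu, hw⟩ := h
  ⟨u, w, huw, hHG.adj hu, hHG.adj hw⟩

end SignedGraph

open SignedGraph

theorem IsSignedK2.adj_terminals {G : TTGraph} (h : IsSignedK2 G) : G.Adj G.s G.t :=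
  let ⟨_, e, he, hj⟩ := h
  ⟨e, he ▸ Finset.mem_singleton_self e, hj⟩

theorem IsSP.exists_adj_terminals {G : TTGraph} (h : IsSP G) :
    (∃ u, u ≠ G.s ∧ G.Adj G.s u) ∧ (∃ u, u ≠ G.t ∧ G.Adj G.t u) := by
  induction h with
  | @k2 G hk2 =>
    exact ⟨⟨_, G.s_ne_t.symm, hk2.adj_terminals⟩,
      ⟨_, G.s_ne_t, hk2.adj_terminals.symm⟩⟩
  | series hc _ _ ih₁ ih₂ =>
    obtain ⟨u, hu, hadju⟩ := ih₁.1
    obtain ⟨w, hw, hadjw⟩ := ih₂.2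
    exact ⟨⟨u, hc.src ▸ hu, hc.src ▸ hc.sub1.adj hadju⟩,
      ⟨w, hc.tgt ▸ hw, hc.tgt ▸ hc.sub2.adj hadjw⟩⟩
  | parallel hc _ _ ih₁ _ =>
    obtain ⟨⟨u, hu, hadju⟩, ⟨w, hw, hadjw⟩⟩ := ih₁
    exact ⟨⟨u, hc.src ▸ hu, hc.src ▸ hc.sub1.adj hadju⟩,
      ⟨w, hc.tgt ▸ hw, hc.tgt ▸ hc.sub1.adj hadjw⟩⟩

/-- The two halves share only the middle vertex, so its neighbours in `H₁` and in `H₂` differ. -/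
theorem IsSeriesConn2.hasTwoNeighbours_mid {G H₁ H₂ : TTGraph} (hc : IsSeriesConn2 G H₁ H₂)
    (h₁ : IsSP H₁) (h₂ : IsSP H₂) : G.HasTwoNeighbours H₁.t := by
  obtain ⟨u, hu, hadju⟩ := h₁.exists_adj_terminals.2
  obtain ⟨w, hw, hadjw⟩ := h₂.exists_adj_terminals.1
  have huw : u ≠ w := by
    rintro rfl
    have : u ∈ H₁.verts ∩ H₂.verts := Finset.mem_inter.mpr ⟨hadju.mem_right, hadjw.mem_right⟩
    rw [hc.vert_inter, Finset.mem_singleton] at this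
    exact hu this
  exact ⟨u, w, huw, hc.sub1.adj hadju, hc.mid ▸ hc.sub2.adj hadjw⟩

theorem IsSP.hasTwoNeighbours {G : TTGraph} (h : IsSP G) {v : ℕ} (hv : v ∈ G.verts)
    (hs : v ≠ G.s) (ht : v ≠ G.t) : G.HasTwoNeighbours v := by
  induction h generalizing v with
  | k2 hk2 =>
    rw [hk2.1, Finset.mem_insert, Finset.mem_singleton] at hv
    tauto
  | @series G H₁ H₂ hc h₁ h₂ ih₁ ih₂ =>
    by_cases hmid : v = H₁.t
    · exact hmid ▸ hc.hasTwoNeighbours_mid h₁ h₂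
    rw [← hc.vert_union, Finset.mem_union] at hv
    rcases hv with hv | hv
    · exact hc.sub1.hasTwoNeighbours (ih₁ hv (hc.src ▸ hs) hmid)
    · exact hc.sub2.hasTwoNeighbours (ih₂ hv (hc.mid ▸ hmid) (hc.tgt ▸ ht))
  | @parallel G H₁ H₂ hc _ _ ih₁ ih₂ =>
    rw [← hc.vert_union, Finset.mem_union] at hv
    rcases hv with hv | hv
    · exact hc.sub1.hasTwoNeighbours (ih₁ hv (hc.src ▸ hs) (hc.tgt ▸ ht))
    · exact hc.sub2.hasTwoNeighbours
        (ih₂ hv (hc.src_eq ▸ hc.src ▸ hs) (hc.tgt_eq ▸ hc.tgt ▸ ht))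

/-- Each non-terminal vertex of a series-parallel graph has
at least two distinct neighbours. -/
theorem nonterminal_has_two_neighbours (G : TTGraph) (hSP : IsSP G)
    (v : ℕ) (hv : v ∈ G.verts) (hs : v ≠ G.s) (ht : v ≠ G.t) :
    ∃ u w, u ≠ w ∧ G.toSignedGraph.Adj v u ∧ G.toSignedGraph.Adj v w :=
  hSP.hasTwoNeighbours hv hs ht
end
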